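/- arXiv:0809.4964 — 2 statements merged into one kernel-verified Lean document; each statement's English description precedes it below -/
import Mathlib

section
/- If ℱ is a doubly stable filter on a quasi-uniform space (X, 𝒰), then the filter ℱ_𝒰 generated by {U_ℱ : U ∈ 𝒰} coincides with the 2-envelope 𝒟_𝒰(ℱ). -/
open Filter Set

variable {X Y : Type*}

/-- Image of a set under a relation: `U(A) = {y : ∃ x ∈ A, (x,y) ∈ U}`. -/
def relImg (U : Set (X × X)) (A : Set X) : Set X := {y | ∃ x ∈ A, (x, y) ∈ U}

/-- Inverse image: `U⁻¹(A) = {y : ∃ x ∈ A, (y,x) ∈ U}`. -/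
def relPre (U : Set (X × X)) (A : Set X) : Set X := {y | ∃ x ∈ A, (y, x) ∈ U}

/-- A quasi-uniformity: a filter of reflexive relations, each containing
a relational square of a member. -/
structure IsQuasiUniformity (𝒰 : Filter (X × X)) : Prop where
  refl : ∀ U ∈ 𝒰, SetRel.id ⊆ U
  comp : ∀ U ∈ 𝒰, ∃ V ∈ 𝒰, SetRel.comp V V ⊆ U

/-- A filter is stable if `⋂_{F ∈ ℱ} U(F) ∈ ℱ` for all `U ∈ 𝒰`. -/
def IsStable (𝒰 : Filter (X × X)) (ℱ : Filter X) : Prop :=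
  ∀ U ∈ 𝒰, (⋂ F ∈ ℱ.sets, relImg U F) ∈ ℱ

/-- `U_ℱ = ⋂_{F ∈ ℱ} (U⁻¹(F) ∩ U(F))`. -/
def bigU (U : Set (X × X)) (ℱ : Filter X) : Set X :=
  ⋂ F ∈ ℱ.sets, (relPre U F ∩ relImg U F)

/-- A filter is doubly stable if `U_ℱ ∈ ℱ` for all `U ∈ 𝒰`. -/
def IsDoublyStable (𝒰 : Filter (X × X)) (ℱ : Filter X) : Prop :=
  ∀ U ∈ 𝒰, bigU U ℱ ∈ ℱ

/-- The 2-envelope of a filter. -/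
def envelope (𝒰 : Filter (X × X)) (ℱ : Filter X) : Filter X :=
  Filter.generate {S | ∃ U ∈ 𝒰, ∃ F ∈ ℱ, S = relPre U F ∩ relImg U F}

/-- The filter `ℱ_𝒰` generated by `{U_ℱ : U ∈ 𝒰}`. -/
def filterU (𝒰 : Filter (X × X)) (ℱ : Filter X) : Filter X :=
  Filter.generate {S | ∃ U ∈ 𝒰, S = bigU U ℱ}

/-- `τ(𝒰)`-cluster points of a filter. -/
def fwdCluster (𝒰 : Filter (X × X)) (ℱ : Filter X) : Set X :=
  {x | ∀ F ∈ ℱ, ∀ U ∈ 𝒰, ∃ y ∈ F, (x, y) ∈ U}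

/-- `τ(𝒰⁻¹)`-cluster points of a filter. -/
def bwdCluster (𝒰 : Filter (X × X)) (ℱ : Filter X) : Set X :=
  {x | ∀ F ∈ ℱ, ∀ U ∈ 𝒰, ∃ y ∈ F, (y, x) ∈ U}

/-- The set of double cluster points of a filter. -/
def doubleCluster (𝒰 : Filter (X × X)) (ℱ : Filter X) : Set X :=
  fwdCluster 𝒰 ℱ ∩ bwdCluster 𝒰 ℱ

/-- The basic entourage `U_D = U_+ ∩ U_-` of the stability quasi-uniformity. -/
def UD (U : Set (X × X)) : Set (Filter X × Filter X) :=
  {p | (⋂ F ∈ p.1.sets, relImg U F) ∈ p.2 ∧ (⋂ G ∈ p.2.sets, relPre U G) ∈ p.1}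

/-! Every `U_ℱ` lies inside all generators `U⁻¹(F) ∩ U(F)` of the envelope, so `ℱ_𝒰` is always
finer than `𝒟_𝒰(ℱ)`. Conversely, if `V ∘ V ⊆ U` and `ℱ` is doubly stable, then `V_ℱ ∈ ℱ`, and the
envelope generator `V⁻¹(V_ℱ) ∩ V(V_ℱ)` is contained in `U_ℱ`, because each point of `V_ℱ` is
`V`-close to every `F ∈ ℱ` in both directions. -/

section Relations

variable {U V W : Set (X × X)} {A B : Set X}

theorem relPre_mono (hUV : U ⊆ V) (hAB : A ⊆ B) : relPre U A ⊆ relPre V B :=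
  fun _ ⟨x, hx, hyx⟩ => ⟨x, hAB hx, hUV hyx⟩

theorem relImg_mono (hUV : U ⊆ V) (hAB : A ⊆ B) : relImg U A ⊆ relImg V B :=
  fun _ ⟨x, hx, hxy⟩ => ⟨x, hAB hx, hUV hxy⟩

theorem relPre_relPre_subset : relPre V (relPre W A) ⊆ relPre (SetRel.comp V W) A :=
  fun _ ⟨_, ⟨z, hz, hxz⟩, hyx⟩ => ⟨z, hz, _, hyx, hxz⟩

theorem relImg_relImg_subset : relImg W (relImg V A) ⊆ relImg (SetRel.comp V W) A :=
  fun _ ⟨_, ⟨z, hz, hzx⟩, hxy⟩ => ⟨z, hz, _, hzx, hxy⟩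

end Relations

section Envelope

variable {𝒰 : Filter (X × X)} {ℱ : Filter X} {U V : Set (X × X)} {F : Set X}

theorem bigU_subset (hF : F ∈ ℱ) : bigU U ℱ ⊆ relPre U F ∩ relImg U F :=
  biInter_subset_of_mem hF

theorem bigU_mono (hUV : U ⊆ V) : bigU U ℱ ⊆ bigU V ℱ :=
  biInter_mono subset_rfl fun _ _ => inter_subset_inter (relPre_mono hUV subset_rfl)
    (relImg_mono hUV subset_rfl)

theorem relPre_bigU_inter_relImg_bigU_subset :
    relPre V (bigU V ℱ) ∩ relImg V (bigU V ℱ) ⊆ bigU (SetRel.comp V V) ℱ := by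
  refine subset_iInter₂ fun F hF => inter_subset_inter ?_ ?_
  · calc relPre V (bigU V ℱ) ⊆ relPre V (relPre V F) :=
          relPre_mono subset_rfl fun _ hx => (bigU_subset hF hx).1
      _ ⊆ relPre (SetRel.comp V V) F := relPre_relPre_subset
  · calc relImg V (bigU V ℱ) ⊆ relImg V (relImg V F) :=
          relImg_mono subset_rfl fun _ hx => (bigU_subset hF hx).2
      _ ⊆ relImg (SetRel.comp V V) F := relImg_relImg_subset

theorem bigU_mem_filterU (hU : U ∈ 𝒰) : bigU U ℱ ∈ filterU 𝒰 ℱ :=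
  mem_generate_of_mem ⟨U, hU, rfl⟩

theorem relPre_inter_relImg_mem_envelope (hU : U ∈ 𝒰) (hF : F ∈ ℱ) :
    relPre U F ∩ relImg U F ∈ envelope 𝒰 ℱ :=
  mem_generate_of_mem ⟨U, hU, F, hF, rfl⟩

theorem filterU_le_envelope : filterU 𝒰 ℱ ≤ envelope 𝒰 ℱ := by
  rw [envelope, le_generate_iff]
  rintro _ ⟨U, hU, F, hF, rfl⟩
  exact mem_of_superset (bigU_mem_filterU hU) (bigU_subset hF)

theorem envelope_le_filterU (h𝒰 : IsQuasiUniformity 𝒰) (hds : IsDoublyStable 𝒰 ℱ) :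
    envelope 𝒰 ℱ ≤ filterU 𝒰 ℱ := by
  rw [filterU, le_generate_iff]
  rintro _ ⟨U, hU, rfl⟩
  obtain ⟨V, hV, hVU⟩ := h𝒰.comp U hU
  exact mem_of_superset (relPre_inter_relImg_mem_envelope hV (hds V hV))
    (relPre_bigU_inter_relImg_bigU_subset.trans (bigU_mono hVU))

end Envelope

theorem stmt9 (𝒰 : Filter (X × X)) (h𝒰 : IsQuasiUniformity 𝒰) (ℱ : Filter X)
    (hds : IsDoublyStable 𝒰 ℱ) : filterU 𝒰 ℱ = envelope 𝒰 ℱ :=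
  filterU_le_envelope.antisymm (envelope_le_filterU h𝒰 hds)
end

section
/- The map C ↦ 𝒞_C sending a nonempty subset C of a quasi-uniform space (X, 𝒰) to the principal filter generated by C is a quasi-uniform embedding of (𝒫₀(X), 𝒰_H) into (S_D(X), 𝒰_D): for every U ∈ 𝒰 and nonempty A, B ⊆ X, (A, B) ∈ U_H if and only if (𝒞_A, 𝒞_B) ∈ U_D. -/
open Filter Set

variable {X Y : Type*}

/-- The basic entourage of the Hausdorff quasi-uniformity. -/
def UH (U : Set (X × X)) : Set (Set X × Set X) :=
  {p | p.2 ⊆ relImg U p.1 ∧ p.1 ⊆ relPre U p.2}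

lemma relImg_mono_s14 {U : Set (X × X)} {A B : Set X} (h : A ⊆ B) : relImg U A ⊆ relImg U B :=
  fun _ ⟨x, hx, hxy⟩ => ⟨x, h hx, hxy⟩

lemma relPre_mono_s14 {U : Set (X × X)} {A B : Set X} (h : A ⊆ B) : relPre U A ⊆ relPre U B :=
  fun _ ⟨x, hx, hxy⟩ => ⟨x, h hx, hxy⟩

lemma subset_relImg_of_id_subset {U : Set (X × X)} (hU : SetRel.id ⊆ U) (A : Set X) :
    A ⊆ relImg U A :=
  fun x hx => ⟨x, hx, hU rfl⟩

lemma subset_relPre_of_id_subset {U : Set (X × X)} (hU : SetRel.id ⊆ U) (A : Set X) :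
    A ⊆ relPre U A :=
  fun x hx => ⟨x, hx, hU rfl⟩

lemma biInter_relImg_principal (U : Set (X × X)) (C : Set X) :
    ⋂ F ∈ (𝓟 C).sets, relImg U F = relImg U C :=
  subset_antisymm (biInter_subset_of_mem (mem_principal_self C))
    (subset_iInter₂ fun _ hF => relImg_mono_s14 hF)

lemma biInter_relPre_principal (U : Set (X × X)) (C : Set X) :
    ⋂ F ∈ (𝓟 C).sets, relPre U F = relPre U C :=
  subset_antisymm (biInter_subset_of_mem (mem_principal_self C))
    (subset_iInter₂ fun _ hF => relPre_mono_s14 hF)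

lemma bigU_principal (U : Set (X × X)) (C : Set X) :
    bigU U (𝓟 C) = relPre U C ∩ relImg U C := by
  simp only [bigU, iInter_inter_distrib, biInter_relPre_principal, biInter_relImg_principal]

lemma isDoublyStable_principal {𝒰 : Filter (X × X)} (h𝒰 : ∀ U ∈ 𝒰, SetRel.id ⊆ U)
    (C : Set X) : IsDoublyStable 𝒰 (𝓟 C) := fun U hU => by
  rw [bigU_principal, mem_principal]
  exact subset_inter (subset_relPre_of_id_subset (h𝒰 U hU) C)
    (subset_relImg_of_id_subset (h𝒰 U hU) C)

lemma principal_mem_UD_iff (U : Set (X × X)) (A B : Set X) :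
    (𝓟 A, 𝓟 B) ∈ UD U ↔ (A, B) ∈ UH U := by
  simp only [UD, UH, mem_ofPred_eq, biInter_relImg_principal, biInter_relPre_principal,
    mem_principal]

theorem stmt14 (𝒰 : Filter (X × X)) (h𝒰 : IsQuasiUniformity 𝒰) :
    (∀ C : Set X, C.Nonempty → IsDoublyStable 𝒰 (Filter.principal C)) ∧
    (∀ A B : Set X, Filter.principal A = Filter.principal B → A = B) ∧
    (∀ U ∈ 𝒰, ∀ A B : Set X, A.Nonempty → B.Nonempty →
      ((A, B) ∈ UH U ↔ (Filter.principal A, Filter.principal B) ∈ UD U)) :=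
  ⟨fun C _ => isDoublyStable_principal h𝒰.refl C,
    fun _ _ => principal_eq_iff_eq.mp,
    fun U _ A B _ _ => (principal_mem_UD_iff U A B).symm⟩
end
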